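/- arXiv:1802.09858 — 2 statements merged into one kernel-verified Lean document; each statement's English description precedes it below -/
import Mathlib

section
/- Sufficiency direction of Kummer's test: If {a_n} is a sequence of positive real numbers and there exist a sequence {B_n} of positive real numbers and an integer N ≥ 1 such that B_n · (a_n / a_{n+1}) − B_{n+1} ≥ 1 for all n ≥ N, then the series ∑_{n=1}^∞ a_n converges. -/
/-!
Multiplying the hypothesis by `a (n + 1) > 0` gives
`a (n + 1) ≤ B n * a n - B (n + 1) * a (n + 1)`, so the partial sums telescope and are bounded
by the first term of the nonnegative sequence `B n * a n`.
-/

open Finset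

theorem summable_of_le_sub_succ {f g : ℕ → ℝ} (hf : ∀ n, 0 ≤ f n) (hg : ∀ n, 0 ≤ g n)
    (h : ∀ n, f n ≤ g n - g (n + 1)) : Summable f := by
  refine summable_of_sum_range_le hf (c := g 0) fun n => ?_
  calc ∑ i ∈ range n, f i ≤ ∑ i ∈ range n, (g i - g (i + 1)) := sum_le_sum fun i _ => h i
    _ = g 0 - g n := sum_range_sub' g n
    _ ≤ g 0 := sub_le_self _ (hg n)

theorem le_mul_sub_mul_of_one_le_mul_div_sub {x y b c : ℝ} (hy : 0 < y)
    (h : 1 ≤ b * (x / y) - c) : y ≤ b * x - c * y := by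
  calc y = y * 1 := (mul_one y).symm
    _ ≤ y * (b * (x / y) - c) := mul_le_mul_of_nonneg_left h hy.le
    _ = b * x - c * y := by field_simp

theorem summable_of_kummer {a B : ℕ → ℝ} (ha : ∀ n, 0 < a n) (hB : ∀ n, 0 ≤ B n)
    (h : ∀ n, 1 ≤ B n * (a n / a (n + 1)) - B (n + 1)) : Summable a := by
  have hshift : Summable fun n => a (n + 1) :=
    summable_of_le_sub_succ (g := fun n => B n * a n) (fun n => (ha (n + 1)).le)
      (fun n => mul_nonneg (hB n) (ha n).le)
      (fun n => le_mul_sub_mul_of_one_le_mul_div_sub (ha (n + 1)) (h n))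
  exact (summable_nat_add_iff 1).mp hshift

theorem kummers_test_sufficiency_general (a : ℕ → ℝ) (hpos : ∀ n, 1 ≤ n → 0 < a n)
    (B : ℕ → ℝ) (hBpos : ∀ n, 1 ≤ n → 0 < B n) (N : ℕ)
    (h : ∀ n, N ≤ n → B n * (a n / a (n + 1)) - B (n + 1) ≥ 1) :
    Summable (fun n : ℕ => a (n + 1)) := by
  have htail : Summable fun k => a (k + N + 1) :=
    summable_of_kummer (B := fun k => B (k + N + 1)) (fun k => hpos _ (by omega))
      (fun k => (hBpos _ (by omega)).le) fun k => by
        simpa only [Nat.add_right_comm k 1] using h (k + N + 1) (by omega)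
  exact (summable_nat_add_iff N).mp htail

/-- Sufficiency direction of Kummer's test. -/
theorem kummers_test_sufficiency (a : ℕ → ℝ) (hpos : ∀ n, 1 ≤ n → 0 < a n)
    (B : ℕ → ℝ) (hBpos : ∀ n, 1 ≤ n → 0 < B n) (N : ℕ) (hN : 1 ≤ N)
    (h : ∀ n, N ≤ n → B n * (a n / a (n + 1)) - B (n + 1) ≥ 1) :
    Summable (fun n : ℕ => a (n + 1)) :=
  kummers_test_sufficiency_general a hpos B hBpos N h
end

section
/- Ratio form of Kummer's test: A series of positive real numbers ∑_{n=1}^∞ a_n converges if and only if there exist a sequence {B_n} of positive real numbers, a real number ρ > 0, and an integer N ≥ 1 such that a_{n+1} / a_n ≤ B_n / (ρ + B_{n+1}) for all n ≥ N. -/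
/-!
Kummer's test in difference form reads `ρ a_{n+1} ≤ a_n B_n - a_{n+1} B_{n+1}`; multiplying out,
the ratio condition is exactly this. Summing the difference form telescopes, so `ρ` times any
partial sum from `N` on is bounded by `a_N B_N`. Conversely, if the series converges, the tail sums
`T_n = ∑_{m > n} a_m` satisfy `T_n - T_{n+1} = a_{n+1}`, so `B_n = T_n / a_n` and `ρ = 1` satisfy
the condition with equality.
-/

lemma div_le_div_add_iff_mul_le_sub {x y b c ρ : ℝ} (hx : 0 < x) (hρc : 0 < ρ + c) :
    y / x ≤ b / (ρ + c) ↔ ρ * y ≤ x * b - y * c := by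
  rw [div_le_div_iff₀ hx hρc]
  constructor <;> intro h <;> linarith

lemma summable_of_mul_le_sub_succ {f g : ℕ → ℝ} {ρ : ℝ} (hρ : 0 < ρ) (hf : ∀ n, 0 ≤ f n)
    (hg : ∀ n, 0 ≤ g n) (h : ∀ n, ρ * f n ≤ g n - g (n + 1)) : Summable f := by
  refine summable_of_sum_range_le hf (c := g 0 / ρ) fun n => ?_
  rw [le_div_iff₀' hρ, Finset.mul_sum]
  calc ∑ i ∈ Finset.range n, ρ * f i
      ≤ ∑ i ∈ Finset.range n, (g i - g (i + 1)) := Finset.sum_le_sum fun i _ => h i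
    _ = g 0 - g n := Finset.sum_range_sub' g n
    _ ≤ g 0 := sub_le_self _ (hg n)

lemma Summable.tsum_nat_add_eq_add_tsum_nat_add_succ {f : ℕ → ℝ} (hf : Summable f) (n : ℕ) :
    ∑' k, f (k + n) = f n + ∑' k, f (k + (n + 1)) := by
  rw [((summable_nat_add_iff n).2 hf).tsum_eq_zero_add]
  simp only [zero_add, add_right_comm _ 1 n, add_assoc]

/-- Ratio form of Kummer's test: `∑_{n=1}^∞ a n` converges iff there exist a positive
sequence `B`, a real `ρ > 0` and an integer `N ≥ 1` such that
`a (n+1) / a n ≤ B n / (ρ + B (n+1))` for all `n ≥ N`. -/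
theorem kummers_test_ratio_form (a : ℕ → ℝ) (hpos : ∀ n, 1 ≤ n → 0 < a n) :
    Summable (fun n : ℕ => a (n + 1)) ↔
      ∃ B : ℕ → ℝ, (∀ n, 1 ≤ n → 0 < B n) ∧
        ∃ ρ : ℝ, 0 < ρ ∧ ∃ N : ℕ, 1 ≤ N ∧
          ∀ n, N ≤ n → a (n + 1) / a n ≤ B n / (ρ + B (n + 1)) := by
  constructor
  · intro hsum
    set T : ℕ → ℝ := fun n => ∑' k, a (k + n + 1)
    have hT_pos n : 0 < T n :=
      ((summable_nat_add_iff n).2 hsum).tsum_pos (fun k => (hpos _ (by omega)).le) 0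
        (hpos _ (by omega))
    have hT_succ n : T n - T (n + 1) = a (n + 1) := by
      have h := hsum.tsum_nat_add_eq_add_tsum_nat_add_succ n
      simp only [T, h]
      ring
    refine ⟨fun n => T n / a n, fun n hn => div_pos (hT_pos n) (hpos n hn), 1, one_pos, 1,
      le_rfl, fun n hn => ?_⟩
    have han : 0 < a n := hpos n hn
    have han1 : 0 < a (n + 1) := hpos (n + 1) (by omega)
    have hden : 0 < 1 + T (n + 1) / a (n + 1) := add_pos one_pos (div_pos (hT_pos _) han1)
    rw [div_le_div_add_iff_mul_le_sub han hden, mul_div_cancel₀ _ han.ne',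
      mul_div_cancel₀ _ han1.ne', hT_succ, one_mul]
  · rintro ⟨B, hB, ρ, hρ, N, hN, hratio⟩
    have haB_pos n : 0 < a (n + N) * B (n + N) := mul_pos (hpos _ (by omega)) (hB _ (by omega))
    refine (summable_nat_add_iff N).1 <| summable_of_mul_le_sub_succ hρ
      (fun n => (hpos _ (by omega)).le) (fun n => (haB_pos n).le) fun n => ?_
    have hden : 0 < ρ + B (n + N + 1) := add_pos hρ (hB _ (by omega))
    simpa only [add_right_comm n 1 N] using
      (div_le_div_add_iff_mul_le_sub (hpos _ (by omega)) hden).1 (hratio (n + N) (by omega))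
end
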